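/- For every positive integer a and every positive integer s, there exist S₂-full sets F₁ < F₂ < ... < F_s such that F_i ⊆ [a, τ(s, 2a+s-1) - 1] for every i ∈ [s]. -/

import Mathlib

open Finset

/-- `F < G` for finite sets: every element of `F` is below every element of `G`. -/
def FinsetLT (F G : Finset ℕ) : Prop := ∀ x ∈ F, ∀ y ∈ G, x < y

/-- Membership in the Schreier family `S₁`: a finite set of positive integers
with `|F| ≤ min F` (the empty set belongs trivially). -/
def IsSchreier (F : Finset ℕ) : Prop := ∀ n ∈ F, 0 < n ∧ F.card ≤ n

/-- `F` is a union of at most `d` sets `F₁ < F₂ < ⋯`, each in the family `P`. -/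
def Combine (P : Finset ℕ → Prop) (d : ℕ) (F : Finset ℕ) : Prop :=
  ∃ L : List (Finset ℕ), L.length ≤ d ∧ L.Pairwise FinsetLT ∧
    (∀ G ∈ L, P G) ∧ L.foldr (· ∪ ·) ∅ = F

/-- Membership in `S₂`. -/
def MemS2 (F : Finset ℕ) : Prop :=
  F = ∅ ∨ ∃ h : F.Nonempty, Combine IsSchreier (F.min' h) F

/-- Membership in `S₃`. -/
def MemS3 (F : Finset ℕ) : Prop :=
  F = ∅ ∨ ∃ h : F.Nonempty, Combine MemS2 (F.min' h) F

/-- `F` is a maximal member of the family `P` (among sets of positive integers). -/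
def IsFull (P : Finset ℕ → Prop) (F : Finset ℕ) : Prop :=
  P F ∧ ∀ n : ℕ, 0 < n → n ∉ F → ¬ P (insert n F)

/-- `F ∈ full_{a,b}(P)`. -/
def FullAB (P : Finset ℕ → Prop) (a b : ℕ) (F : Finset ℕ) : Prop :=
  P F ∧ F ⊆ Finset.Icc a b ∧ a ∈ F ∧
    ∀ n ∈ Finset.Icc a b, n ∉ F → ¬ P (insert n F)

/-- The tower function `τ`. -/
def tau : ℕ → ℕ → ℕ
  | 0, a => a
  | i + 1, a => 2 ^ tau i a

/-- `E₁(F)`: `F` itself if `|F| ≤ min F`, otherwise the `min F` smallest elements of `F`. -/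
def E1 (F : Finset ℕ) : Finset ℕ :=
  if h : F.Nonempty then ((F.sort (· ≤ ·)).take (F.min' h)).toFinset else ∅

/-- Union of the first `i` greedy pieces. -/
def Eacc : ℕ → Finset ℕ → Finset ℕ
  | 0, _ => ∅
  | i + 1, F => Eacc i F ∪ E1 (F \ Eacc i F)

/-- The `i`-th greedy piece `E_i(F)` (for `i ≥ 1`). -/
def Epiece (i : ℕ) (F : Finset ℕ) : Finset ℕ := E1 (F \ Eacc (i - 1) F)

open Classical in
/-- `E₁*(F)`: `F` itself if `F ∈ S₂`, otherwise `E₁(F) ∪ ⋯ ∪ E_{min F}(F)`. -/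
noncomputable def E1star (F : Finset ℕ) : Finset ℕ :=
  if MemS2 F then F
  else if h : F.Nonempty then Eacc (F.min' h) F else ∅

/-- Union of the first `i` starred greedy pieces. -/
noncomputable def EaccStar : ℕ → Finset ℕ → Finset ℕ
  | 0, _ => ∅
  | i + 1, F => EaccStar i F ∪ E1star (F \ EaccStar i F)

/-- The `i`-th starred greedy piece `E_i*(F)` (for `i ≥ 1`). -/
noncomputable def EpieceStar (i : ℕ) (F : Finset ℕ) : Finset ℕ :=
  E1star (F \ EaccStar (i - 1) F)

/-!
The interval `[m, 2^m·m)` is `S₂`-full for every `m ≥ 1`: it is the union of the `m` Schreier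
blocks `[2^k·m, 2^(k+1)·m)`, `k < m`, and it is already as dense as an `S₂` set with minimum at
most `m` can be. Indeed, if `P₁ < ⋯ < P_d` are Schreier sets whose union `U` is `m`-packed, i.e.
`x ≤ m + #{y ∈ U | y < x}` for every non-maximal `x ∈ U`, then `#U + m ≤ 2^d·m`: the first block
has at most `min P₁ ≤ m` elements, and the union of the remaining ones is `(m + #P₁)`-packed
with `m + #P₁ ≤ 2m`. Adding any new point to `[m, 2^m·m)` leaves it `m`-packed but makes
`#U + m = 2^m·m + 1`. Iterating `m ↦ 2^m·m` from `a` gives `s` consecutive full intervals, and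
`2^m·m ≤ 2^(2m)` keeps the endpoints below the tower `τ(s, 2a + s - 1)`.
-/

lemma mem_foldr_union {L : List (Finset ℕ)} {x : ℕ} :
    x ∈ L.foldr (· ∪ ·) ∅ ↔ ∃ P ∈ L, x ∈ P := by
  induction L with
  | nil => simp
  | cons P L ih => simp [ih]

lemma finsetLT_Ico_of_monotone {f : ℕ → ℕ} (hf : Monotone f) {i j : ℕ} (hij : i < j) :
    FinsetLT (Ico (f i) (f (i + 1))) (Ico (f j) (f (j + 1))) := by
  intro x hx y hy
  rw [mem_Ico] at hx hy
  have := hf (show i + 1 ≤ j from hij)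
  omega

lemma foldr_union_map_range'_Ico {f : ℕ → ℕ} (hf : Monotone f) (j n : ℕ) :
    ((List.range' j n).map fun k => Ico (f k) (f (k + 1))).foldr (· ∪ ·) ∅ =
      Ico (f j) (f (j + n)) := by
  induction n generalizing j with
  | zero => simp
  | succ n ih =>
    rw [List.range'_succ, List.map_cons, List.foldr_cons, ih, ← add_assoc,
      Ico_union_Ico_eq_Ico (hf (by omega)) (hf (by omega))]
    ring_nf

lemma isSchreier_Ico {a b : ℕ} (ha : 0 < a) (hb : b ≤ 2 * a) : IsSchreier (Ico a b) := by
  intro n hn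
  rw [mem_Ico] at hn
  rw [Nat.card_Ico]
  exact ⟨ha.trans_le hn.1, by omega⟩

lemma memS2_Ico_two_pow_mul {m : ℕ} (hm : 0 < m) : MemS2 (Ico m (2 ^ m * m)) := by
  have hmono : Monotone fun k => 2 ^ k * m := fun i j hij =>
    Nat.mul_le_mul_right m (Nat.pow_le_pow_right two_pos hij)
  have hne : (Ico m (2 ^ m * m)).Nonempty :=
    nonempty_Ico.2 (lt_mul_left hm (Nat.one_lt_two_pow hm.ne'))
  have hmin : (Ico m (2 ^ m * m)).min' hne = m :=
    le_antisymm (min'_le _ _ (mem_Ico.2 ⟨le_rfl, nonempty_Ico.1 hne⟩))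
      (le_min' _ _ _ fun y hy => (mem_Ico.1 hy).1)
  refine Or.inr ⟨hne, ?_⟩
  rw [hmin]
  refine ⟨(List.range' 0 m).map fun k => Ico (2 ^ k * m) (2 ^ (k + 1) * m), by simp, ?_, ?_, ?_⟩
  · rw [List.pairwise_map]
    exact (List.pairwise_lt_range' (s := 0) (n := m)).imp (finsetLT_Ico_of_monotone hmono)
  · simp only [List.mem_map]
    rintro _ ⟨k, -, rfl⟩
    exact isSchreier_Ico (by positivity) (by rw [pow_succ]; linarith)
  · simpa using foldr_union_map_range'_Ico hmono 0 m

def IsPacked (m : ℕ) (U : Finset ℕ) : Prop :=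
  ∀ x ∈ U, (∃ y ∈ U, x < y) → x ≤ m + #{y ∈ U | y < x}

lemma IsPacked.of_union_left {P U : Finset ℕ} {m : ℕ} (hPU : ∀ x ∈ P, ∀ y ∈ U, x < y)
    (h : IsPacked m (P ∪ U)) : IsPacked (m + #P) U := by
  intro y hy ⟨z, hz, hyz⟩
  have hsplit : {z ∈ P ∪ U | z < y} = P ∪ {z ∈ U | z < y} := by
    rw [filter_union, filter_true_of_mem fun z hz => hPU z hz y hy]
  have hdisj : Disjoint P {z ∈ U | z < y} :=
    disjoint_left.2 fun w hwP hwU => (hPU w hwP w (mem_filter.1 hwU).1).false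
  have := h y (mem_union_right P hy) ⟨z, mem_union_right P hz, hyz⟩
  rw [hsplit, card_union_of_disjoint hdisj] at this
  omega

lemma card_foldr_union_add_le (L : List (Finset ℕ)) (hL : L.Pairwise FinsetLT)
    (hSchreier : ∀ P ∈ L, IsSchreier P) {m : ℕ} (hm : 0 < m)
    (hpacked : IsPacked m (L.foldr (· ∪ ·) ∅)) :
    #(L.foldr (· ∪ ·) ∅) + m ≤ 2 ^ L.length * m := by
  induction L generalizing m with
  | nil => simp
  | cons P L ih =>
    set U := L.foldr (· ∪ ·) ∅
    have hPU : ∀ x ∈ P, ∀ y ∈ U, x < y := fun x hx y hy => by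
      obtain ⟨Q, hQ, hyQ⟩ := mem_foldr_union.1 hy
      exact List.rel_of_pairwise_cons hL hQ x hx y hyQ
    have ih' := @ih hL.of_cons fun Q hQ => hSchreier Q (List.mem_cons_of_mem _ hQ)
    have hpow : 2 ^ (P :: L).length = 2 * 2 ^ L.length := by
      rw [List.length_cons, pow_succ, mul_comm]
    change IsPacked m (P ∪ U) at hpacked
    change #(P ∪ U) + m ≤ _
    rw [hpow]
    rcases P.eq_empty_or_nonempty with rfl | hP
    · rw [empty_union] at hpacked ⊢
      nlinarith [ih' hm hpacked]
    set x := P.min' hP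
    have hxP : x ∈ P := P.min'_mem hP
    have hx_le : ∀ y ∈ P ∪ U, x ≤ y := fun y hy =>
      (mem_union.1 hy).elim (P.min'_le y) fun hyU => (hPU x hxP y hyU).le
    by_cases hmax : ∃ y ∈ P ∪ U, x < y
    · have hxm : x ≤ m := by
        have hbelow : {y ∈ P ∪ U | y < x} = ∅ :=
          filter_eq_empty_iff.2 fun y hy => not_lt.2 (hx_le y hy)
        simpa [hbelow] using hpacked x (mem_union_left U hxP) hmax
      have hPm : #P ≤ m := ((hSchreier P List.mem_cons_self) x hxP).2.trans hxm
      have hdisj : Disjoint P U := disjoint_left.2 fun w hwP hwU => (hPU w hwP w hwU).false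
      rw [card_union_of_disjoint hdisj]
      nlinarith [ih' (by omega : 0 < m + #P) (hpacked.of_union_left hPU)]
    · have hsingle : P ∪ U ⊆ {x} := fun y hy =>
        mem_singleton.2 (le_antisymm (not_lt.1 fun h => hmax ⟨y, hy, h⟩) (hx_le y hy))
      have := card_le_card hsingle
      rw [card_singleton] at this
      nlinarith [Nat.one_le_two_pow (n := L.length)]

lemma isPacked_insert_Ico {m M n : ℕ} (hn : n ∉ Ico m M) : IsPacked m (insert n (Ico m M)) := by
  intro x hx ⟨y, hy, hxy⟩
  rw [mem_Ico] at hn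
  rcases mem_insert.1 hx with rfl | hxI
  · rcases mem_insert.1 hy with rfl | hyI
    · omega
    · rw [mem_Ico] at hyI
      omega
  · have hsub : Ico m x ⊆ {y ∈ insert n (Ico m M) | y < x} := fun y hy => by
      rw [mem_Ico] at hxI hy
      exact mem_filter.2 ⟨mem_insert_of_mem (mem_Ico.2 ⟨hy.1, by omega⟩), hy.2⟩
    have := card_le_card hsub
    rw [Nat.card_Ico] at this
    omega

lemma isFull_Ico_two_pow_mul {m : ℕ} (hm : 0 < m) : IsFull MemS2 (Ico m (2 ^ m * m)) := by
  refine ⟨memS2_Ico_two_pow_mul hm, fun n _ hn hS2 => ?_⟩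
  have hmM : m ≤ 2 ^ m * m := Nat.le_mul_of_pos_left m (by positivity)
  have hmG : m ∈ insert n (Ico m (2 ^ m * m)) :=
    mem_insert_of_mem (mem_Ico.2 ⟨le_rfl, lt_mul_left hm (Nat.one_lt_two_pow hm.ne')⟩)
  obtain hG | ⟨_, L, hlen, hL, hSchreier, hunion⟩ := hS2
  · simp [hG] at hmG
  have hbound := card_foldr_union_add_le L hL hSchreier hm (hunion ▸ isPacked_insert_Ico hn)
  rw [hunion, card_insert_of_notMem hn, Nat.card_Ico] at hbound
  have := Nat.mul_le_mul_right m (Nat.pow_le_pow_right two_pos (hlen.trans (min'_le _ _ hmG)))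
  omega

def fullBlockStart (a : ℕ) : ℕ → ℕ
  | 0 => a
  | i + 1 => 2 ^ fullBlockStart a i * fullBlockStart a i

lemma fullBlockStart_pos {a : ℕ} (ha : 0 < a) (i : ℕ) : 0 < fullBlockStart a i := by
  induction i with
  | zero => exact ha
  | succ i ih => exact Nat.mul_pos (by positivity) ih

lemma monotone_fullBlockStart (a : ℕ) : Monotone (fullBlockStart a) :=
  monotone_nat_of_le_succ fun i => Nat.le_mul_of_pos_left _ (by positivity)

lemma monotone_tau (c : ℕ) : Monotone fun i => tau i c :=
  monotone_nat_of_le_succ fun _ => Nat.lt_two_pow_self.le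

lemma two_mul_fullBlockStart_le_tau {a c : ℕ} (ha : 0 < a) (hc : 2 * a ≤ c) (i : ℕ) :
    2 * fullBlockStart a i ≤ tau i c := by
  induction i with
  | zero => exact hc
  | succ i ih =>
    set m := fullBlockStart a i
    calc 2 * (2 ^ m * m) = 2 ^ m * (2 * m) := by ring
      _ ≤ 2 ^ m * 2 ^ m := Nat.mul_le_mul_left _ (by
          have := Nat.lt_two_pow_self (n := m - 1)
          have := fullBlockStart_pos ha i
          rw [show m = m - 1 + 1 by omega, pow_succ]
          omega)
      _ = 2 ^ (2 * m) := by rw [← pow_add, two_mul]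
      _ ≤ tau (i + 1) c := Nat.pow_le_pow_right two_pos ih

theorem stmt6_general (a s : ℕ) (ha : 0 < a) :
    ∃ F : Fin s → Finset ℕ,
      (∀ i, IsFull MemS2 (F i)) ∧
      (∀ i j : Fin s, i < j → FinsetLT (F i) (F j)) ∧
      (∀ i, F i ⊆ Finset.Icc a (tau s (2 * a + s - 1) - 1)) := by
  refine ⟨fun i => Ico (fullBlockStart a i) (fullBlockStart a (i + 1)), fun i => ?_,
    fun i j hij => finsetLT_Ico_of_monotone (monotone_fullBlockStart a) hij, fun i x hx => ?_⟩
  · exact isFull_Ico_two_pow_mul (fullBlockStart_pos ha i)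
  · have hstart : a ≤ fullBlockStart a i := monotone_fullBlockStart a (Nat.zero_le i)
    have hend : 2 * fullBlockStart a (i + 1) ≤ tau s (2 * a + s - 1) :=
      (two_mul_fullBlockStart_le_tau ha (by have := i.isLt; omega) (i + 1)).trans
        (monotone_tau _ (Nat.succ_le_of_lt i.isLt))
    rw [mem_Ico] at hx
    rw [mem_Icc]
    omega

theorem stmt6 (a s : ℕ) (ha : 0 < a) (hs : 0 < s) :
    ∃ F : Fin s → Finset ℕ,
      (∀ i, IsFull MemS2 (F i)) ∧
      (∀ i j : Fin s, i < j → FinsetLT (F i) (F j)) ∧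
      (∀ i, F i ⊆ Finset.Icc a (tau s (2 * a + s - 1) - 1)) :=
  stmt6_general a s ha
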